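/- For any vector m = (m_1,…,m_n) of positive integers and any π ∈ Q_m, the orbit Orb(π) = {φ_S(π) : S ⊆ [n]} of π under the group action generated by the commuting involutions φ_x (x ∈ [n]), where φ_S = ∏_{x∈S} φ_x, contains exactly one generalized Stirling permutation π̃ with sddes(π̃) = fdesp(π̃) = 0. -/

import Mathlib

open scoped Classical

noncomputable section

/-- The `i`-th entry of the word `π`, positions `1,…,m`, with the boundary
convention `π₀ = π_{m+1} = 0` (indeed `ent π i = 0` for `i = 0` or `i > π.length`). -/
def ent (π : List ℕ) (i : ℕ) : ℕ := if i = 0 then 0 else π.getD (i - 1) 0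

/-- The index set `{0, 1, …, m}`. -/
def idx0 (π : List ℕ) : Finset ℕ := Finset.range (π.length + 1)

/-- The index set `[m] = {1, …, m}`. -/
def idx1 (π : List ℕ) : Finset ℕ := Finset.Icc 1 π.length

/-- Number of ascents. -/
def asc (π : List ℕ) : ℕ := ((idx0 π).filter fun i => ent π i < ent π (i + 1)).card

/-- Number of descents. -/
def des (π : List ℕ) : ℕ := ((idx0 π).filter fun i => ent π (i + 1) < ent π i).card

/-- Number of plateaux. -/
def plat (π : List ℕ) : ℕ := ((idx0 π).filter fun i => ent π i = ent π (i + 1)).card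

/-- Number of single descents: descents `i ∈ [m]` whose letter `π_i` occurs once. -/
def sdes (π : List ℕ) : ℕ :=
  ((idx1 π).filter fun i => ent π (i + 1) < ent π i ∧ π.count (ent π i) = 1).card

/-- Number of multiple descents: descents `i ∈ [m]` whose letter `π_i` occurs more than once. -/
def mdes (π : List ℕ) : ℕ :=
  ((idx1 π).filter fun i => ent π (i + 1) < ent π i ∧ 2 ≤ π.count (ent π i)).card

/-- Number of double-ascents. -/
def dasc (π : List ℕ) : ℕ :=
  ((idx1 π).filter fun i => ent π (i - 1) < ent π i ∧ ent π i < ent π (i + 1)).card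

/-- Number of single double-descents. -/
def sddes (π : List ℕ) : ℕ :=
  ((idx1 π).filter fun i =>
    ent π (i + 1) < ent π i ∧ ent π i < ent π (i - 1) ∧ π.count (ent π i) = 1).card

/-- `i` is a plateau of `π`. -/
def IsPlateau (π : List ℕ) (i : ℕ) : Prop := ent π i = ent π (i + 1)

/-- `i` is a first plateau of `π`. -/
def IsFirstPlateau (π : List ℕ) (i : ℕ) : Prop :=
  IsPlateau π i ∧ ∀ j, 1 ≤ j → j < i → ent π j ≠ ent π i

/-- `i` is an ascent-plateau of `π`. -/
def IsAscPlateau (π : List ℕ) (i : ℕ) : Prop := ent π (i - 1) < ent π i ∧ IsPlateau π i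

/-- `i` is a free descent-plateau of `π`. -/
def IsFreeDescPlateau (π : List ℕ) (i : ℕ) : Prop :=
  ent π i < ent π (i - 1) ∧ IsPlateau π i ∧ ∀ j, 1 ≤ j → j < i → ent π j ≠ ent π i

/-- `i` is an unmovable plateau of `π`. -/
def IsUnmovablePlateau (π : List ℕ) (i : ℕ) : Prop :=
  IsPlateau π i ∧ ¬ IsFreeDescPlateau π i ∧ ¬ IsAscPlateau π i

/-- Number of first plateaux. -/
def fplat (π : List ℕ) : ℕ := ((idx1 π).filter fun i => IsFirstPlateau π i).card

/-- Number of unmovable plateaux. -/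
def uplat (π : List ℕ) : ℕ := ((idx1 π).filter fun i => IsUnmovablePlateau π i).card

/-- Number of free descent-plateaux. -/
def fdesp (π : List ℕ) : ℕ := ((idx1 π).filter fun i => IsFreeDescPlateau π i).card

/-- Number of ascent-plateaux and peaks. -/
def ascpp (π : List ℕ) : ℕ :=
  ((idx1 π).filter fun i =>
    (ent π (i - 1) < ent π i ∧ IsPlateau π i) ∨
    (ent π (i - 1) < ent π i ∧ ent π (i + 1) < ent π i)).card

/-- Number of indices that are multiple descents or unmovable plateaux. -/
def mdup (π : List ℕ) : ℕ :=
  ((idx1 π).filter fun i =>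
    (ent π (i + 1) < ent π i ∧ 2 ≤ π.count (ent π i)) ∨ IsUnmovablePlateau π i).card

/-- The multiset `M_m = {1^{m₁}, …, n^{mₙ}}`. -/
def Mm {n : ℕ} (mv : Fin n → ℕ) : Multiset ℕ :=
  ∑ i : Fin n, Multiset.replicate (mv i) (i.1 + 1)

/-- The generalized Stirling condition: all the entries lying between any two occurrences
of a letter are larger than (or equal to, i.e. other occurrences of) that letter. -/
def IsGenStirling (π : List ℕ) : Prop :=
  ∀ c < π.length, ∀ b < c, ∀ a < b,
    π.getD a 0 = π.getD c 0 → π.getD a 0 ≤ π.getD b 0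

/-- `Q_m`: the (finite) set of generalized Stirling permutations of `M_m`. -/
def QF {n : ℕ} (mv : Fin n → ℕ) : Finset (List ℕ) :=
  (Mm mv).toList.permutations.toFinset.filter fun π => IsGenStirling π


/-- The (1-based) position of the leftmost occurrence of the letter `x` in `π`. -/
def lpos (π : List ℕ) (x : ℕ) : ℕ := π.idxOf x + 1

/-- `x` is a free descent-plateau value of `π`: the leftmost occurrence `ℓ` of `x`
is a free descent-plateau (freeness being automatic for the leftmost occurrence). -/
def IsFDPVal (π : List ℕ) (x : ℕ) : Prop :=
  x ∈ π ∧ x < ent π (lpos π x - 1) ∧ ent π (lpos π x + 1) = x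

/-- `x` is a single double-descent value of `π`. -/
def IsSDDVal (π : List ℕ) (x : ℕ) : Prop :=
  x ∈ π ∧ π.count x = 1 ∧ x < ent π (lpos π x - 1) ∧ ent π (lpos π x + 1) < x

/-- `x` is a double-ascent value of `π`. -/
def IsDAVal (π : List ℕ) (x : ℕ) : Prop :=
  x ∈ π ∧ ent π (lpos π x - 1) < x ∧ x < ent π (lpos π x + 1)

/-- The generalized Foata--Strehl action `φ_x`.  If `x` is a free descent-plateau or a
single double-descent value, its leftmost occurrence `π_ℓ` is moved to the right of `π_k`
where `k = max {a : 0 ≤ a ≤ ℓ - 2, π_a < x}`; if `x` is a double-ascent value, `π_ℓ` is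
moved to the left of `π_k` where `k = min {a : ℓ + 2 ≤ a ≤ m + 1, π_a ≤ x}`; otherwise
`π` is fixed.  (Positions are 1-based with `π_0 = π_{m+1} = 0`; lists are 0-indexed, so
the leftmost occurrence of `x` is at list index `ℓ - 1 = π.indexOf x`.) -/
def gfs (π : List ℕ) (x : ℕ) : List ℕ :=
  if IsFDPVal π x ∨ IsSDDVal π x then
    (π.eraseIdx (π.idxOf x)).insertIdx
      (((Finset.range (π.idxOf x)).filter fun a => ent π a < x).sup id) x
  else if IsDAVal π x then
    (π.eraseIdx (π.idxOf x)).insertIdx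
      ((insert (π.length + 1)
          ((Finset.Icc (π.idxOf x + 3) (π.length + 1)).filter fun a => ent π a ≤ x)).min'
        (Finset.insert_nonempty _ _) - 2) x
  else π

/-- `φ_S = ∏_{x ∈ S} φ_x`: apply the (commuting) maps `φ_x` for all `x ∈ S`. -/
def gfsSet (S : Finset ℕ) (π : List ℕ) : List ℕ :=
  (S.sort (· ≤ ·)).foldl gfs π

/-!
`φ_x` only ever exchanges two words `A ++ x :: (B ++ C)` and `A ++ B ++ x :: C` in which
every letter of the block `B` exceeds `x`, the letter before `B` is smaller than `x` and the
letter after `B` is at most `x` (`IsBlockJump`). In the first word `x` is a double-ascent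
value, in the second a free descent-plateau or single double-descent value; the Stirling
property passes from either word to the other; and every other letter keeps its type, because
its neighbours compare with it in the same way in both words. Hence `φ_S` swaps the type of
exactly the letters of `S` and keeps the type of all others. As `sddes σ = fdesp σ = 0` says
that no letter of `σ` is a free descent-plateau or single double-descent value, the only such
word in the orbit of `π` is `φ_D π`, where `D` is the set of these letters of `π`: any
admissible `S` differs from `D` only in letters `y` that `φ_y` leaves in place.
-/

lemma List.insertIdx_length_append {α : Type*} (A B : List α) (x : α) :
    (A ++ B).insertIdx A.length x = A ++ x :: B := by
  induction A with
  | nil => simp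
  | cons a A ih => simp [List.insertIdx_succ_cons, ih]

lemma List.eraseIdx_length_append_cons {α : Type*} (A B : List α) (x : α) :
    (A ++ x :: B).eraseIdx A.length = A ++ B := by
  rw [List.eraseIdx_append_of_length_le le_rfl, Nat.sub_self, List.eraseIdx_cons_zero]

lemma List.eq_nil_or_eq_append_singleton {α : Type*} (l : List α) :
    l = [] ∨ ∃ L a, l = L ++ [a] := by
  simpa using l.eq_nil_or_concat

lemma List.Sublist.append_cons_cases {α : Type*} {l L R : List α} {x : α}
    (h : l.Sublist (L ++ x :: R)) :
    l.Sublist (L ++ R) ∨ ∃ l₁ l₂, l = l₁ ++ x :: l₂ ∧ l₁.Sublist L ∧ l₂.Sublist R := by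
  obtain ⟨l₁, l₂, rfl, h₁, h₂⟩ := List.sublist_append_iff.1 h
  rcases List.sublist_cons_iff.1 h₂ with hR | ⟨r, rfl, hr⟩
  · exact Or.inl (h₁.append hR)
  · exact Or.inr ⟨l₁, r, rfl, h₁, hr⟩

lemma Finset.sort_filter {α : Type*} [LinearOrder α] (S : Finset α) (p : α → Prop)
    [DecidablePred p] : (S.filter p).sort (· ≤ ·) = (S.sort (· ≤ ·)).filter p :=
  List.Perm.eq_of_pairwise' (Finset.pairwise_sort _ _) ((Finset.pairwise_sort _ _).filter _)
    ((List.perm_ext_iff_of_nodup (Finset.sort_nodup _ _) ((Finset.sort_nodup _ _).filter _)).2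
      fun y => by simp)

/-! ### Neighbours of a letter

In `P ++ y :: Q` the letters next to `y` are `P.getLastD 0` and `Q.headD 0`; the default `0`
is the boundary convention `π₀ = π_{m+1} = 0`. -/

lemma ent_succ (w : List ℕ) (j : ℕ) : ent w (j + 1) = w.getD j 0 := by
  simp [ent]

lemma ent_append_length (P Q : List ℕ) : ent (P ++ Q) P.length = P.getLastD 0 := by
  induction P using List.reverseRecOn with
  | nil => rfl
  | append_singleton P a _ => simp [ent, List.getD_eq_getElem?_getD]

lemma ent_append_length_add_one (P Q : List ℕ) (i : ℕ) :
    ent (P ++ Q) (P.length + i + 1) = Q.getD i 0 := by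
  simp [ent, List.getD_eq_getElem?_getD, List.getElem?_append_right]

lemma ent_append_cons_length_add_one (P Q : List ℕ) (y : ℕ) :
    ent (P ++ y :: Q) (P.length + 1) = y := by
  simpa using ent_append_length_add_one P (y :: Q) 0

lemma ent_append_cons_length_add_two (P Q : List ℕ) (y i : ℕ) :
    ent (P ++ y :: Q) (P.length + i + 2) = Q.getD i 0 :=
  ent_append_length_add_one P (y :: Q) (i + 1)

lemma ent_append_cons_length_add_one_add_one (P Q : List ℕ) (y : ℕ) :
    ent (P ++ y :: Q) (P.length + 1 + 1) = Q.headD 0 := by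
  rw [List.headD_eq_getD, ← ent_append_cons_length_add_two P Q y 0]

lemma lpos_append_cons {P Q : List ℕ} {y : ℕ} (hy : y ∉ P) :
    lpos (P ++ y :: Q) y = P.length + 1 := by
  simp [lpos, List.idxOf_append_of_notMem hy]

lemma forall_ent_ne_iff_notMem (P Q : List ℕ) (y : ℕ) :
    (∀ j, 1 ≤ j → j < P.length + 1 → ent (P ++ y :: Q) j ≠ y) ↔ y ∉ P := by
  rw [List.mem_iff_getElem]
  constructor
  · rintro h ⟨j, hj, rfl⟩
    exact h (j + 1) (by omega) (by omega) (by
      rw [ent_succ, List.getD_append _ _ _ _ hj, List.getD_eq_getElem _ _ hj])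
  · intro h j hj1 hj2 he
    obtain ⟨j, rfl⟩ : ∃ i, j = i + 1 := ⟨j - 1, by omega⟩
    rw [ent_succ, List.getD_append _ _ _ _ (by omega), List.getD_eq_getElem _ _ (by omega)] at he
    exact h ⟨j, by omega, he⟩

lemma length_add_one_mem_idx1 (P Q : List ℕ) (y : ℕ) : P.length + 1 ∈ idx1 (P ++ y :: Q) := by
  simp [idx1]

lemma exists_append_cons_of_mem_idx1 {w : List ℕ} {i : ℕ} (hi : i ∈ idx1 w) :
    ∃ P y Q, w = P ++ y :: Q ∧ i = P.length + 1 := by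
  rw [idx1, Finset.mem_Icc] at hi
  obtain ⟨k, rfl⟩ : ∃ k, i = k + 1 := ⟨i - 1, by omega⟩
  refine ⟨w.take k, w[k], w.drop (k + 1), ?_, by simp; omega⟩
  rw [List.getElem_cons_drop, List.take_append_drop]

section Neighbours

variable {P Q : List ℕ} {y : ℕ}

lemma ent_lpos_sub_one (hy : y ∉ P) :
    ent (P ++ y :: Q) (lpos (P ++ y :: Q) y - 1) = P.getLastD 0 := by
  rw [lpos_append_cons hy, Nat.add_sub_cancel, ent_append_length]

lemma ent_lpos_add_one (hy : y ∉ P) :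
    ent (P ++ y :: Q) (lpos (P ++ y :: Q) y + 1) = Q.headD 0 := by
  rw [lpos_append_cons hy, ent_append_cons_length_add_one_add_one]

lemma isDAVal_append_cons_iff (hy : y ∉ P) :
    IsDAVal (P ++ y :: Q) y ↔ P.getLastD 0 < y ∧ y < Q.headD 0 := by
  simp [IsDAVal, ent_lpos_sub_one hy, ent_lpos_add_one hy]

lemma isFDPVal_append_cons_iff (hy : y ∉ P) :
    IsFDPVal (P ++ y :: Q) y ↔ y < P.getLastD 0 ∧ Q.headD 0 = y := by
  simp [IsFDPVal, ent_lpos_sub_one hy, ent_lpos_add_one hy]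

lemma isSDDVal_append_cons_iff (hy : y ∉ P) :
    IsSDDVal (P ++ y :: Q) y ↔ y ∉ Q ∧ y < P.getLastD 0 ∧ Q.headD 0 < y := by
  simp [IsSDDVal, ent_lpos_sub_one hy, ent_lpos_add_one hy, List.count_eq_zero_of_not_mem hy,
    List.count_eq_zero]

lemma isFreeDescPlateau_iff :
    IsFreeDescPlateau (P ++ y :: Q) (P.length + 1) ↔ y ∉ P ∧ IsFDPVal (P ++ y :: Q) y := by
  rw [IsFreeDescPlateau, IsPlateau, ent_append_cons_length_add_one, Nat.add_sub_cancel,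
    ent_append_length, ent_append_cons_length_add_one_add_one, forall_ent_ne_iff_notMem]
  constructor
  · rintro ⟨h₁, h₂, hyP⟩
    exact ⟨hyP, (isFDPVal_append_cons_iff hyP).2 ⟨h₁, h₂.symm⟩⟩
  · rintro ⟨hyP, h⟩
    obtain ⟨h₁, h₂⟩ := (isFDPVal_append_cons_iff hyP).1 h
    exact ⟨h₁, h₂.symm, hyP⟩

lemma single_double_descent_iff :
    (ent (P ++ y :: Q) (P.length + 1 + 1) < ent (P ++ y :: Q) (P.length + 1) ∧
      ent (P ++ y :: Q) (P.length + 1) < ent (P ++ y :: Q) (P.length + 1 - 1) ∧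
      (P ++ y :: Q).count (ent (P ++ y :: Q) (P.length + 1)) = 1) ↔
      y ∉ P ∧ IsSDDVal (P ++ y :: Q) y := by
  rw [ent_append_cons_length_add_one, Nat.add_sub_cancel, ent_append_length,
    ent_append_cons_length_add_one_add_one]
  have hcount : (P ++ y :: Q).count y = 1 ↔ y ∉ P ∧ y ∉ Q := by
    simp only [List.count_append, List.count_cons_self, ← List.count_eq_zero]
    omega
  rw [hcount]
  constructor
  · rintro ⟨h₁, h₂, hyP, hyQ⟩
    exact ⟨hyP, (isSDDVal_append_cons_iff hyP).2 ⟨hyQ, h₂, h₁⟩⟩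
  · rintro ⟨hyP, h⟩
    obtain ⟨hyQ, h₂, h₁⟩ := (isSDDVal_append_cons_iff hyP).1 h
    exact ⟨h₁, h₂, hyP, hyQ⟩

end Neighbours

theorem fdesp_eq_zero_iff {w : List ℕ} : fdesp w = 0 ↔ ∀ y, ¬ IsFDPVal w y := by
  rw [fdesp, Finset.card_eq_zero, Finset.filter_eq_empty_iff]
  constructor
  · intro h y hy
    obtain ⟨P, Q, rfl, hyP⟩ := List.eq_append_cons_of_mem hy.1
    exact h (length_add_one_mem_idx1 P Q y) (isFreeDescPlateau_iff.2 ⟨hyP, hy⟩)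
  · intro h i hi hfree
    obtain ⟨P, y, Q, rfl, rfl⟩ := exists_append_cons_of_mem_idx1 hi
    exact h y (isFreeDescPlateau_iff.1 hfree).2

theorem sddes_eq_zero_iff {w : List ℕ} : sddes w = 0 ↔ ∀ y, ¬ IsSDDVal w y := by
  rw [sddes, Finset.card_eq_zero, Finset.filter_eq_empty_iff]
  constructor
  · intro h y hy
    obtain ⟨P, Q, rfl, hyP⟩ := List.eq_append_cons_of_mem hy.1
    exact h (length_add_one_mem_idx1 P Q y) (single_double_descent_iff.2 ⟨hyP, hy⟩)
  · intro h i hi hsdd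
    obtain ⟨P, y, Q, rfl, rfl⟩ := exists_append_cons_of_mem_idx1 hi
    exact h y (single_double_descent_iff.1 hsdd).2

lemma isGenStirling_iff_sublist {w : List ℕ} :
    IsGenStirling w ↔ ∀ a b, [a, b, a].Sublist w → a ≤ b := by
  constructor
  · intro hst a b hsub
    obtain ⟨f, hf⟩ := List.sublist_iff_exists_fin_orderEmbedding_get_eq.1 hsub
    have ha : a = w[(f 0 : ℕ)] := hf 0
    have hb : b = w[(f 1 : ℕ)] := hf 1
    have ha' : a = w[(f 2 : ℕ)] := hf 2
    have h01 : (f 0 : ℕ) < f 1 := f.strictMono (Fin.lt_def.2 (by simp))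
    have h12 : (f 1 : ℕ) < f 2 := f.strictMono (Fin.lt_def.2 (by simp))
    have := hst (f 2) (f 2).isLt (f 1) h12 (f 0) h01
    rw [List.getD_eq_getElem _ _ (f 0).isLt, List.getD_eq_getElem _ _ (f 1).isLt,
      List.getD_eq_getElem _ _ (f 2).isLt, ← ha, ← hb, ← ha'] at this
    exact this rfl
  · intro h c hc b hbc a hab heq
    have hsub := List.map_getElem_sublist (l := w)
      (is := [⟨a, by omega⟩, ⟨b, by omega⟩, ⟨c, hc⟩]) (by simp; omega)
    rw [List.getD_eq_getElem _ _ (by omega), List.getD_eq_getElem _ _ (by omega)] at heq ⊢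
    simp only [List.map_cons, List.map_nil, Fin.getElem_fin] at hsub
    rw [← heq] at hsub
    exact h _ _ hsub

/-! ### Letter types -/

inductive LetterKind
  | fdpOrSdd
  | da
  | fixed

def LetterKind.swap : LetterKind → LetterKind
  | fdpOrSdd => da
  | da => fdpOrSdd
  | fixed => fixed

/-- Which branch of the definition of `φ_x` applies to the letter `x` of `w`. -/
def letterKind (w : List ℕ) (x : ℕ) : LetterKind :=
  if IsFDPVal w x ∨ IsSDDVal w x then .fdpOrSdd else if IsDAVal w x then .da else .fixed

section LetterKind

variable {w : List ℕ} {x : ℕ}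

lemma letterKind_eq_fdpOrSdd : letterKind w x = .fdpOrSdd ↔ IsFDPVal w x ∨ IsSDDVal w x := by
  unfold letterKind; split_ifs <;> simp_all

lemma letterKind_eq_da : letterKind w x = .da ↔ IsDAVal w x := by
  unfold letterKind
  split_ifs with h1 h2
  · refine iff_of_false nofun fun ⟨_, h, h'⟩ => ?_
    rcases h1 with ⟨_, _, _⟩ | ⟨_, _, _, _⟩ <;> omega
  · exact iff_of_true rfl h2
  · exact iff_of_false nofun h2

lemma mem_of_letterKind_ne_fixed (h : letterKind w x ≠ .fixed) : x ∈ w := by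
  unfold letterKind at h
  split_ifs at h with h1 h2
  · exact h1.elim (·.1) (·.1)
  · exact h2.1
  · exact absurd rfl h

lemma letterKind_of_notMem (h : x ∉ w) : letterKind w x = .fixed := by
  by_contra hne
  exact h (mem_of_letterKind_ne_fixed hne)

lemma gfs_of_letterKind_eq_fixed (h : letterKind w x = .fixed) : gfs w x = w := by
  unfold letterKind at h
  split_ifs at h with h1 h2
  rw [gfs, if_neg h1, if_neg h2]

end LetterKind

lemma rel_iff_of_compare_eq {α : Type*} [LinearOrder α] {a a' y : α} (h : compare a y = compare a' y) :
    (a < y ↔ a' < y) ∧ (y < a ↔ y < a') ∧ (a = y ↔ a' = y) := by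
  have hlt := compare_lt_iff_lt (a := a) (b := y)
  have hgt := compare_gt_iff_gt (a := a) (b := y)
  have heq := compare_eq_iff_eq (a := a) (b := y)
  rw [h] at hlt hgt heq
  exact ⟨hlt.symm.trans compare_lt_iff_lt, hgt.symm.trans compare_gt_iff_gt,
    heq.symm.trans compare_eq_iff_eq⟩

lemma letterKind_append_cons_congr {P Q P' Q' : List ℕ} {y : ℕ} (hP : y ∉ P) (hP' : y ∉ P')
    (hQ : y ∈ Q ↔ y ∈ Q') (hl : compare (P.getLastD 0) y = compare (P'.getLastD 0) y)
    (hr : compare (Q.headD 0) y = compare (Q'.headD 0) y) :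
    letterKind (P ++ y :: Q) y = letterKind (P' ++ y :: Q') y := by
  obtain ⟨hl_lt, hl_gt, -⟩ := rel_iff_of_compare_eq hl
  obtain ⟨hr_lt, hr_gt, hr_eq⟩ := rel_iff_of_compare_eq hr
  simp only [letterKind, isFDPVal_append_cons_iff hP, isFDPVal_append_cons_iff hP',
    isSDDVal_append_cons_iff hP, isSDDVal_append_cons_iff hP', isDAVal_append_cons_iff hP,
    isDAVal_append_cons_iff hP', hl_lt, hl_gt, hr_lt, hr_gt, hr_eq, hQ]

theorem sddes_eq_zero_and_fdesp_eq_zero_iff {w : List ℕ} :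
    sddes w = 0 ∧ fdesp w = 0 ↔ ∀ y, letterKind w y ≠ .fdpOrSdd := by
  simp only [sddes_eq_zero_iff, fdesp_eq_zero_iff, ne_eq, letterKind_eq_fdpOrSdd, not_or,
    forall_and, and_comm]

/-! ### Block jumps -/

/-- The letter `x` can jump over the block `B`, which sits between `A` and `C`: this is the
situation in which `φ_x` exchanges `A ++ x :: (B ++ C)` and `A ++ B ++ x :: C`, the words that
the lemmas below call `left` and `right`. -/
structure IsBlockJump (A : List ℕ) (x : ℕ) (B C : List ℕ) : Prop where
  notMem_left : x ∉ A
  left_lt : A.getLastD 0 < x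
  block_ne_nil : B ≠ []
  lt_of_mem_block : ∀ b ∈ B, x < b
  right_le : C.headD 0 ≤ x

namespace IsBlockJump

variable {A B C : List ℕ} {x y : ℕ}

lemma notMem_block (h : IsBlockJump A x B C) : x ∉ B :=
  fun hx => lt_irrefl x (h.lt_of_mem_block x hx)

lemma lt_headD_block (h : IsBlockJump A x B C) : x < (B ++ C).headD 0 := by
  obtain ⟨b, B, rfl⟩ := List.exists_cons_of_ne_nil h.block_ne_nil
  exact h.lt_of_mem_block b List.mem_cons_self

lemma lt_getLastD_block (h : IsBlockJump A x B C) : x < (A ++ B).getLastD 0 := by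
  obtain ⟨B, b, rfl⟩ := B.eq_nil_or_eq_append_singleton.resolve_left h.block_ne_nil
  simpa using h.lt_of_mem_block b (by simp)

lemma letterKind_left (h : IsBlockJump A x B C) :
    letterKind (A ++ x :: (B ++ C)) x = .da :=
  letterKind_eq_da.2 <| (isDAVal_append_cons_iff h.notMem_left).2 ⟨h.left_lt, h.lt_headD_block⟩

lemma letterKind_right (h : IsBlockJump A x B C) (hst : IsGenStirling (A ++ x :: (B ++ C))) :
    letterKind (A ++ B ++ x :: C) x = .fdpOrSdd := by
  have hAB : x ∉ A ++ B := by simp [h.notMem_left, h.notMem_block]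
  rw [letterKind_eq_fdpOrSdd, isFDPVal_append_cons_iff hAB, isSDDVal_append_cons_iff hAB]
  rcases h.right_le.eq_or_lt with heq | hlt
  · exact Or.inl ⟨h.lt_getLastD_block, heq⟩
  refine Or.inr ⟨fun hxC => ?_, h.lt_getLastD_block, hlt⟩
  -- a second occurrence of `x` in `C` would enclose the smaller letter at the head of `C`
  obtain ⟨c, C, rfl⟩ := List.exists_cons_of_ne_nil (List.ne_nil_of_mem hxC)
  have hcx : c < x := hlt
  have hxC' : x ∈ C := (List.mem_cons.1 hxC).resolve_left (by omega)
  have hsub : [x, c, x].Sublist (A ++ x :: (B ++ c :: C)) :=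
    (((List.singleton_sublist.2 hxC').cons_cons c).trans (List.sublist_append_right B _)).cons_cons x
      |>.trans (List.sublist_append_right A _)
  have := isGenStirling_iff_sublist.1 hst x c hsub
  omega

lemma letterKind_eq_of_mem_left (h : IsBlockJump A x B C) (hy : y ∈ A) :
    letterKind (A ++ x :: (B ++ C)) y = letterKind (A ++ B ++ x :: C) y := by
  obtain ⟨P, Q, rfl, hyP⟩ := List.eq_append_cons_of_mem hy
  rw [show P ++ y :: Q ++ x :: (B ++ C) = P ++ y :: (Q ++ x :: (B ++ C)) by simp,
    show P ++ y :: Q ++ B ++ x :: C = P ++ y :: (Q ++ (B ++ x :: C)) by simp]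
  refine letterKind_append_cons_congr hyP hyP (List.perm_middle.symm.append_left Q).mem_iff rfl ?_
  rcases Q with _ | ⟨q, Q⟩
  · have hyx : y < x := by simpa using h.left_lt
    obtain ⟨b, B, rfl⟩ := List.exists_cons_of_ne_nil h.block_ne_nil
    have hxb := h.lt_of_mem_block b List.mem_cons_self
    simp only [List.nil_append, List.cons_append, List.headD_cons]
    rw [compare_gt_iff_gt.2 (by omega), compare_gt_iff_gt.2 (by omega)]
  · rfl

lemma letterKind_eq_of_mem_block (h : IsBlockJump A x B C) (hyA : y ∉ A) (hy : y ∈ B) :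
    letterKind (A ++ x :: (B ++ C)) y = letterKind (A ++ B ++ x :: C) y := by
  have hxy : x < y := h.lt_of_mem_block y hy
  obtain ⟨P, Q, rfl, hyP⟩ := List.eq_append_cons_of_mem hy
  rw [show A ++ x :: (P ++ y :: Q ++ C) = (A ++ x :: P) ++ y :: (Q ++ C) by simp,
    show A ++ (P ++ y :: Q) ++ x :: C = (A ++ P) ++ y :: (Q ++ x :: C) by simp]
  refine letterKind_append_cons_congr (by simp [hyA, hyP, hxy.ne']) (by simp [hyA, hyP])
    (by simp [hxy.ne']) ?_ ?_
  · rcases P.eq_nil_or_eq_append_singleton with rfl | ⟨P, p, rfl⟩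
    · rw [List.append_nil, List.getLastD_concat, compare_lt_iff_lt.2 hxy,
        compare_lt_iff_lt.2 (h.left_lt.trans hxy)]
    · simp only [← List.cons_append, ← List.append_assoc, List.getLastD_concat]
  · rcases Q with _ | ⟨q, Q⟩
    · have hC := h.right_le
      simp only [List.nil_append, List.headD_cons]
      rw [compare_lt_iff_lt.2 hxy, compare_lt_iff_lt.2 (by omega)]
    · rfl

lemma letterKind_eq_of_mem_right (h : IsBlockJump A x B C) (hyx : y ≠ x) (hyA : y ∉ A)
    (hyB : y ∉ B) (hy : y ∈ C) :
    letterKind (A ++ x :: (B ++ C)) y = letterKind (A ++ B ++ x :: C) y := by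
  obtain ⟨P, Q, rfl, hyP⟩ := List.eq_append_cons_of_mem hy
  rw [show A ++ x :: (B ++ (P ++ y :: Q)) = (A ++ x :: (B ++ P)) ++ y :: Q by simp,
    show A ++ B ++ x :: (P ++ y :: Q) = (A ++ B ++ x :: P) ++ y :: Q by simp]
  refine letterKind_append_cons_congr (by simp [hyA, hyB, hyP, hyx]) (by simp [hyA, hyB, hyP, hyx])
    Iff.rfl ?_ rfl
  rcases P.eq_nil_or_eq_append_singleton with rfl | ⟨P, p, rfl⟩
  · have hyx' : y < x := lt_of_le_of_ne (by simpa using h.right_le) hyx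
    obtain ⟨B, b, rfl⟩ := B.eq_nil_or_eq_append_singleton.resolve_left h.block_ne_nil
    have hxb := h.lt_of_mem_block b (by simp)
    simp only [List.append_nil, ← List.cons_append, ← List.append_assoc, List.getLastD_concat]
    rw [compare_gt_iff_gt.2 (by omega), compare_gt_iff_gt.2 hyx']
  · simp only [← List.cons_append, ← List.append_assoc, List.getLastD_concat]

lemma letterKind_eq (h : IsBlockJump A x B C) (hyx : y ≠ x) :
    letterKind (A ++ x :: (B ++ C)) y = letterKind (A ++ B ++ x :: C) y := by
  by_cases hyA : y ∈ A
  · exact h.letterKind_eq_of_mem_left hyA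
  by_cases hyB : y ∈ B
  · exact h.letterKind_eq_of_mem_block hyA hyB
  by_cases hyC : y ∈ C
  · exact h.letterKind_eq_of_mem_right hyx hyA hyB hyC
  rw [letterKind_of_notMem (by simp [hyA, hyB, hyC, hyx]),
    letterKind_of_notMem (by simp [hyA, hyB, hyC, hyx])]

lemma isGenStirling_right (h : IsBlockJump A x B C) (hst : IsGenStirling (A ++ x :: (B ++ C))) :
    IsGenStirling (A ++ B ++ x :: C) := by
  rw [isGenStirling_iff_sublist] at hst ⊢
  intro a b hsub
  by_contra! hba
  rcases hsub.append_cons_cases with hsub | ⟨l₁, l₂, heq, h₁, h₂⟩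
  · have := hst a b (hsub.trans (by simp))
    omega
  rcases l₁ with _ | ⟨p, _ | ⟨q, _ | ⟨r, l₁⟩⟩⟩ <;> simp only [List.nil_append, List.cons_append,
    List.cons.injEq, List.nil_eq, List.append_eq_nil_iff, reduceCtorEq, and_false] at heq
  · obtain ⟨hax, rfl⟩ := heq
    subst a
    have := hst x b (((h₂.trans (List.sublist_append_right B C)).cons_cons x).trans
      (List.sublist_append_right A _))
    omega
  · obtain ⟨rfl, hbx, rfl⟩ := heq
    subst b
    have haC := List.singleton_sublist.1 h₂
    rcases List.mem_append.1 (List.singleton_sublist.1 h₁) with haA | haB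
    · have := hst a x ((List.singleton_sublist.2 haA).append
        (((List.singleton_sublist.2 haC).trans (List.sublist_append_right B C)).cons_cons x))
      omega
    -- the head of `C` lies between the two copies of `a`
    obtain ⟨c, C, rfl⟩ := List.exists_cons_of_ne_nil (List.ne_nil_of_mem haC)
    have hcx : c ≤ x := h.right_le
    have haC' : a ∈ C := (List.mem_cons.1 haC).resolve_left (by omega)
    have := hst a c (((List.singleton_sublist.2 haB).append
      ((List.singleton_sublist.2 haC').cons_cons c)).trans
      ((List.sublist_cons_self x _).trans (List.sublist_append_right A _)))
    omega
  · obtain ⟨rfl, -, hpx, -⟩ := heq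
    rcases List.mem_append.1 (h₁.subset List.mem_cons_self) with hA | hB
    · exact h.notMem_left (hpx ▸ hA)
    · exact h.notMem_block (hpx ▸ hB)

lemma isGenStirling_left (h : IsBlockJump A x B C) (hst : IsGenStirling (A ++ B ++ x :: C)) :
    IsGenStirling (A ++ x :: (B ++ C)) := by
  rw [isGenStirling_iff_sublist] at hst ⊢
  intro a b hsub
  by_contra! hba
  rcases hsub.append_cons_cases with hsub | ⟨l₁, l₂, heq, h₁, h₂⟩
  · have := hst a b (hsub.trans (by simp))
    omega
  rcases l₁ with _ | ⟨p, _ | ⟨q, _ | ⟨r, l₁⟩⟩⟩ <;> simp only [List.nil_append, List.cons_append,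
    List.cons.injEq, List.nil_eq, List.append_eq_nil_iff, reduceCtorEq, and_false] at heq
  · obtain ⟨hax, rfl⟩ := heq
    subst a
    obtain ⟨m₁, m₂, hm, hm₁, hm₂⟩ := List.sublist_append_iff.1 h₂
    rcases m₁ with _ | ⟨p, _ | ⟨q, _ | ⟨r, m₁⟩⟩⟩ <;> simp only [List.nil_append, List.cons_append,
      List.cons.injEq, List.nil_eq, reduceCtorEq, and_false] at hm
    · subst hm
      have := hst x b ((hm₂.cons_cons x).trans (List.sublist_append_right (A ++ B) _))
      omega
    · have := h.lt_of_mem_block p (List.singleton_sublist.1 hm₁)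
      omega
    · exact h.notMem_block (hm.2.1 ▸ hm₁.subset (by simp))
  · obtain ⟨rfl, hbx, rfl⟩ := heq
    subst b
    have haA := List.singleton_sublist.1 h₁
    rcases List.mem_append.1 (List.singleton_sublist.1 h₂) with haB | haC
    · -- the last letter of `A` lies between the two copies of `a`
      have hxa := h.lt_of_mem_block a haB
      obtain ⟨A, l, rfl⟩ := A.eq_nil_or_eq_append_singleton.resolve_left (List.ne_nil_of_mem haA)
      have hlx : l < x := by simpa using h.left_lt
      have haA' : a ∈ A := (List.mem_append.1 haA).resolve_right (by simp; omega)
      have := hst a l ((((List.singleton_sublist.2 haA').append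
        ((List.singleton_sublist.2 haB).cons_cons l)).trans (by simp)))
      omega
    · have := hst a x ((List.singleton_sublist.2 (List.mem_append_left B haA)).append
        ((List.singleton_sublist.2 haC).cons_cons x))
      omega
  · obtain ⟨rfl, -, hpx, -⟩ := heq
    exact h.notMem_left (hpx ▸ h₁.subset List.mem_cons_self)

lemma lt_getD_block (h : IsBlockJump A x B C) (D : List ℕ) {i : ℕ} (hi : i < B.length) :
    x < (B ++ D).getD i 0 := by
  rw [List.getD_append _ _ _ _ hi, List.getD_eq_getElem _ _ hi]
  exact h.lt_of_mem_block _ (List.getElem_mem hi)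

lemma gfs_left (h : IsBlockJump A x B C) :
    gfs (A ++ x :: (B ++ C)) x = A ++ B ++ x :: C := by
  have hk := h.letterKind_left
  have hidx : (A ++ x :: (B ++ C)).idxOf x = A.length := by
    simp [List.idxOf_append_of_notMem h.notMem_left]
  have hmin : (insert ((A ++ x :: (B ++ C)).length + 1)
      ((Finset.Icc ((A ++ x :: (B ++ C)).idxOf x + 3) ((A ++ x :: (B ++ C)).length + 1)).filter
        fun a => ent (A ++ x :: (B ++ C)) a ≤ x)).min' (Finset.insert_nonempty _ _) =
      A.length + B.length + 2 := by
    have hB := List.length_pos_of_ne_nil h.block_ne_nil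
    refine le_antisymm (Finset.min'_le _ _ ?_) (Finset.le_min' _ _ _ fun a ha => ?_)
    · refine Finset.mem_insert_of_mem (Finset.mem_filter.2 ⟨Finset.mem_Icc.2 ⟨?_, ?_⟩, ?_⟩)
      · rw [hidx]; omega
      · simp
      · rw [ent_append_cons_length_add_two, List.getD_append_right _ _ _ _ le_rfl, Nat.sub_self,
          ← List.headD_eq_getD]
        exact h.right_le
    rw [hidx] at ha
    simp only [Finset.mem_insert, Finset.mem_filter, Finset.mem_Icc] at ha
    rcases ha with rfl | ⟨⟨ha, -⟩, hax⟩
    · simp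
    by_contra! hlt
    obtain ⟨i, rfl⟩ : ∃ i, a = A.length + i + 2 := ⟨a - A.length - 2, by omega⟩
    rw [ent_append_cons_length_add_two] at hax
    have := h.lt_getD_block C (i := i) (by omega)
    omega
  have hnot : ¬ (IsFDPVal (A ++ x :: (B ++ C)) x ∨ IsSDDVal (A ++ x :: (B ++ C)) x) := by
    rw [← letterKind_eq_fdpOrSdd, hk]; exact nofun
  rw [gfs, if_neg hnot, if_pos (letterKind_eq_da.1 hk), hmin, hidx,
    List.eraseIdx_length_append_cons, Nat.add_sub_cancel, ← List.append_assoc,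
    ← List.length_append, List.insertIdx_length_append]

lemma gfs_right (h : IsBlockJump A x B C) (hk : letterKind (A ++ B ++ x :: C) x = .fdpOrSdd) :
    gfs (A ++ B ++ x :: C) x = A ++ x :: (B ++ C) := by
  have hidx : (A ++ B ++ x :: C).idxOf x = A.length + B.length := by
    simp [List.idxOf_append_of_notMem h.notMem_left, List.idxOf_append_of_notMem h.notMem_block]
  have hent : ∀ i, ent (A ++ B ++ x :: C) (A.length + i + 1) = (B ++ x :: C).getD i 0 :=
    fun i => by rw [List.append_assoc, ent_append_length_add_one]
  have hsup : ((Finset.range ((A ++ B ++ x :: C).idxOf x)).filter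
      fun a => ent (A ++ B ++ x :: C) a < x).sup id = A.length := by
    have hB := List.length_pos_of_ne_nil h.block_ne_nil
    rw [hidx]
    refine le_antisymm (Finset.sup_le fun a ha => ?_) (Finset.le_sup (f := id) ?_)
    · simp only [Finset.mem_filter, Finset.mem_range] at ha
      show a ≤ A.length
      by_contra! hlt
      obtain ⟨i, rfl⟩ : ∃ i, a = A.length + i + 1 := ⟨a - A.length - 1, by omega⟩
      have := h.lt_getD_block (x :: C) (i := i) (by omega)
      rw [hent] at ha
      exact lt_asymm ha.2 this
    · refine Finset.mem_filter.2 ⟨Finset.mem_range.2 (by omega), ?_⟩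
      rw [List.append_assoc, ent_append_length]
      exact h.left_lt
  rw [gfs, if_pos (letterKind_eq_fdpOrSdd.1 hk), hsup, hidx, ← List.length_append,
    List.eraseIdx_length_append_cons, List.append_assoc, List.insertIdx_length_append]

end IsBlockJump

lemma exists_isBlockJump_of_isDAVal {w : List ℕ} {x : ℕ} (h : IsDAVal w x) :
    ∃ A B C, IsBlockJump A x B C ∧ w = A ++ x :: (B ++ C) := by
  obtain ⟨A, D, rfl, hxA⟩ := List.eq_append_cons_of_mem h.1
  obtain ⟨hA, hD⟩ := (isDAVal_append_cons_iff hxA).1 h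
  obtain ⟨d, D, rfl⟩ := List.exists_cons_of_ne_nil (l := D) (by rintro rfl; simp at hD)
  have hxd : x < d := hD
  refine ⟨A, (d :: D).takeWhile (x < ·), (d :: D).dropWhile (x < ·), ⟨hxA, hA, by simp [hxd],
    fun b hb => by simpa using List.mem_takeWhile_imp hb, ?_⟩,
    by rw [List.takeWhile_append_dropWhile]⟩
  cases hC : (d :: D).dropWhile (x < ·) with
  | nil => exact Nat.zero_le x
  | cons c C =>
    have := List.head_dropWhile_not (x < ·) (l := d :: D) (by simp [hC])
    simp only [hC, List.head_cons, decide_eq_false_iff_not, not_lt] at this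
    exact this

lemma exists_isBlockJump_of_fdpOrSdd {w : List ℕ} {x : ℕ} (h0 : 0 ∉ w)
    (h : IsFDPVal w x ∨ IsSDDVal w x) : ∃ A B C, IsBlockJump A x B C ∧ w = A ++ B ++ x :: C := by
  have hxw : x ∈ w := h.elim (·.1) (·.1)
  obtain ⟨P, C, rfl, hxP⟩ := List.eq_append_cons_of_mem hxw
  rw [isFDPVal_append_cons_iff hxP, isSDDVal_append_cons_iff hxP] at h
  have hP : x < P.getLastD 0 := h.elim (·.1) (·.2.1)
  have hC : C.headD 0 ≤ x := h.elim (·.2.le) (·.2.2.le)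
  have hx0 : 0 < x := Nat.pos_of_ne_zero fun hx => h0 (hx ▸ hxw)
  have hPAB := List.rdropWhile_append_rtakeWhile (p := (x < ·)) (l := P)
  refine ⟨P.rdropWhile (x < ·), P.rtakeWhile (x < ·), C, ⟨fun hxA => hxP ?_, ?_, ?_,
    fun b hb => by simpa using List.mem_rtakeWhile_imp hb, hC⟩, by rw [hPAB]⟩
  · rw [← hPAB]; exact List.mem_append_left _ hxA
  · by_cases hA : P.rdropWhile (x < ·) = []
    · rw [hA]; exact hx0
    have hlast := List.rdropWhile_last_not _ _ hA
    have hmem := (List.rdropWhile_prefix (x < ·) P).subset (List.getLast_mem hA)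
    rw [List.getLastD_eq_getLast?, List.getLast?_eq_some_getLast hA]
    simp only [decide_eq_true_eq, not_lt] at hlast
    exact lt_of_le_of_ne hlast fun he => hxP (he ▸ hmem)
  · have hPne : P ≠ [] := by rintro rfl; simp at hP
    rw [Ne, List.rtakeWhile_eq_nil_iff, not_forall]
    exact ⟨hPne, by simpa [List.getLast?_eq_some_getLast hPne] using hP⟩

/-! ### The action on Stirling permutations -/

section Action

variable {w : List ℕ}

theorem gfs_spec (hst : IsGenStirling w) (h0 : 0 ∉ w) (x : ℕ) :
    IsGenStirling (gfs w x) ∧ (gfs w x).Perm w ∧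
      ∀ y, letterKind (gfs w x) y = if y = x then (letterKind w y).swap else letterKind w y := by
  cases hk : letterKind w x with
  | fdpOrSdd =>
    obtain ⟨A, B, C, hj, rfl⟩ := exists_isBlockJump_of_fdpOrSdd h0 (letterKind_eq_fdpOrSdd.1 hk)
    rw [hj.gfs_right hk]
    refine ⟨hj.isGenStirling_left hst, (List.perm_middle.symm.append_left A).trans (by simp),
      fun y => ?_⟩
    split_ifs with hyx
    · rw [hyx, hj.letterKind_left, hk]; rfl
    · exact hj.letterKind_eq hyx
  | da =>
    obtain ⟨A, B, C, hj, rfl⟩ := exists_isBlockJump_of_isDAVal (letterKind_eq_da.1 hk)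
    rw [hj.gfs_left]
    refine ⟨hj.isGenStirling_right hst, (by simpa using List.perm_middle.append_left A),
      fun y => ?_⟩
    split_ifs with hyx
    · rw [hyx, hj.letterKind_right hst, hk]; rfl
    · exact (hj.letterKind_eq hyx).symm
  | fixed =>
    rw [gfs_of_letterKind_eq_fixed hk]
    refine ⟨hst, List.Perm.refl w, fun y => ?_⟩
    split_ifs with hyx
    · rw [hyx, hk]; rfl
    · rfl

theorem foldl_gfs_spec {l : List ℕ} (hl : l.Nodup) (hst : IsGenStirling w) (h0 : 0 ∉ w) :
    IsGenStirling (l.foldl gfs w) ∧ (l.foldl gfs w).Perm w ∧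
      ∀ y, letterKind (l.foldl gfs w) y = if y ∈ l then (letterKind w y).swap else letterKind w y := by
  induction l generalizing w with
  | nil => simp [hst]
  | cons a l ih =>
    obtain ⟨ha, hl⟩ := List.nodup_cons.1 hl
    obtain ⟨hst₁, hperm₁, hk₁⟩ := gfs_spec hst h0 a
    obtain ⟨hst₂, hperm₂, hk₂⟩ := ih hl hst₁ (fun h => h0 (hperm₁.mem_iff.1 h))
    refine ⟨hst₂, hperm₂.trans hperm₁, fun y => ?_⟩
    rw [List.foldl_cons, hk₂, hk₁]
    by_cases hya : y = a
    · subst hya; simp [ha]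
    · simp [hya]

theorem foldl_gfs_filter {l : List ℕ} (hl : l.Nodup) (hst : IsGenStirling w) (h0 : 0 ∉ w) :
    l.foldl gfs w = (l.filter (letterKind w · ≠ .fixed)).foldl gfs w := by
  induction l generalizing w with
  | nil => rfl
  | cons a l ih =>
    obtain ⟨ha, hl⟩ := List.nodup_cons.1 hl
    by_cases hk : letterKind w a = .fixed
    · rw [List.foldl_cons, gfs_of_letterKind_eq_fixed hk, List.filter_cons_of_neg (by simpa),
        ih hl hst h0]
    obtain ⟨hst₁, hperm₁, hk₁⟩ := gfs_spec hst h0 a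
    rw [List.foldl_cons, List.filter_cons_of_pos (by simpa), List.foldl_cons,
      ih hl hst₁ (fun h => h0 (hperm₁.mem_iff.1 h))]
    congr 1
    refine List.filter_congr fun y hy => ?_
    rw [hk₁, if_neg (by rintro rfl; exact ha hy)]

theorem letterKind_gfsSet (S : Finset ℕ) (hst : IsGenStirling w) (h0 : 0 ∉ w) (y : ℕ) :
    letterKind (gfsSet S w) y = if y ∈ S then (letterKind w y).swap else letterKind w y := by
  rw [gfsSet]
  simpa [Finset.mem_sort] using (foldl_gfs_spec (S.sort_nodup (· ≤ ·)) hst h0).2.2 y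

theorem gfsSet_filter (S : Finset ℕ) (hst : IsGenStirling w) (h0 : 0 ∉ w) :
    gfsSet (S.filter (letterKind w · ≠ .fixed)) w = gfsSet S w := by
  rw [gfsSet, gfsSet, Finset.sort_filter, ← foldl_gfs_filter (S.sort_nodup _) hst h0]

end Action

lemma mem_Icc_of_mem_Mm {n : ℕ} {mv : Fin n → ℕ} {x : ℕ} (h : x ∈ Mm mv) :
    x ∈ Finset.Icc 1 n := by
  obtain ⟨i, -, hi⟩ := Multiset.mem_sum.1 h
  rw [Multiset.eq_of_mem_replicate hi, Finset.mem_Icc]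
  omega

lemma isGenStirling_and_mem_Icc_of_mem_QF {n : ℕ} {mv : Fin n → ℕ} {π : List ℕ}
    (hπ : π ∈ QF mv) : IsGenStirling π ∧ ∀ y ∈ π, y ∈ Finset.Icc 1 n := by
  rw [QF, Finset.mem_filter, List.mem_toFinset, List.mem_permutations] at hπ
  exact ⟨hπ.2, fun y hy => mem_Icc_of_mem_Mm (Multiset.mem_toList.1 (hπ.1.mem_iff.1 hy))⟩

theorem gfs_orbit_unique_representative_general {n : ℕ} (mv : Fin n → ℕ)
    (π : List ℕ) (hπ : π ∈ QF mv) :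
    ∃! σ : List ℕ,
      (∃ S ⊆ Finset.Icc 1 n, gfsSet S π = σ) ∧ sddes σ = 0 ∧ fdesp σ = 0 := by
  obtain ⟨hst, hrange⟩ := isGenStirling_and_mem_Icc_of_mem_QF hπ
  have h0 : 0 ∉ π := fun h => by simpa using hrange 0 h
  have hIcc : ∀ y, letterKind π y ≠ .fixed → y ∈ Finset.Icc 1 n :=
    fun y hy => hrange y (mem_of_letterKind_ne_fixed hy)
  set D := (Finset.Icc 1 n).filter (letterKind π · = .fdpOrSdd)
  refine ⟨gfsSet D π, ⟨⟨D, Finset.filter_subset _ _, rfl⟩,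
    sddes_eq_zero_and_fdesp_eq_zero_iff.2 fun y => ?_⟩, ?_⟩
  · rw [letterKind_gfsSet D hst h0]
    cases hk : letterKind π y <;> simp [D, hk, LetterKind.swap, hIcc y]
  rintro σ ⟨⟨S, hS, rfl⟩, hσ⟩
  rw [← gfsSet_filter S hst h0, ← gfsSet_filter D hst h0]
  congr 1
  ext y
  have hy := sddes_eq_zero_and_fdesp_eq_zero_iff.1 hσ y
  rw [letterKind_gfsSet S hst h0] at hy
  cases hk : letterKind π y <;> by_cases hyS : y ∈ S <;> simp_all [D, LetterKind.swap]

/-- every orbit `Orb(π) = {φ_S(π) : S ⊆ [n]}` of the generalized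
Foata--Strehl action on `Q_m` contains exactly one element `π̃` with
`sddes π̃ = fdesp π̃ = 0`. -/
theorem gfs_orbit_unique_representative {n : ℕ} (mv : Fin n → ℕ)
    (hpos : ∀ i, 0 < mv i) (π : List ℕ) (hπ : π ∈ QF mv) :
    ∃! σ : List ℕ,
      (∃ S ⊆ Finset.Icc 1 n, gfsSet S π = σ) ∧ sddes σ = 0 ∧ fdesp σ = 0 :=
  gfs_orbit_unique_representative_general mv π hπ

end
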